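/- arXiv:2105.14405 — 4 statements merged into one kernel-verified Lean document; each statement's English description precedes it below -/
import Mathlib

section
/- For every level j with 2 ≤ j ≤ n and indices 1 ≤ k < i ≤ m, the directed edge (v_{i,j}, v_{k,j−1}) belongs to E_LS if and only if there exists an ε_[j]-valid match (l[1], …, l[j]) of the prefix signature S_[j] in the log L with l[j−1] = k and l[j] = i. -/
structure Packet (B : Type*) where
  t : ℝ
  b : B

def ValidPair {B : Type*} (δ : ℝ) (p' p'' q' q'' : Packet B) : Prop :=
  p'.b = q'.b ∧ p''.b = q''.b ∧ |(p''.t - p'.t) - (q''.t - q'.t)| ≤ δ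

def StrictTimes {B : Type*} (m : ℕ) (L : ℕ → Packet B) : Prop :=
  ∀ i i', 1 ≤ i → i < i' → i' ≤ m → (L i).t < (L i').t

def IsMatch {B : Type*} (m n : ℕ) (L Q : ℕ → Packet B) (ε : ℕ → ℝ) (l : ℕ → ℕ) : Prop :=
  (∀ j, 1 ≤ j → j ≤ n → 1 ≤ l j ∧ l j ≤ m) ∧
  (∀ j, 1 ≤ j → j + 1 ≤ n → l j < l (j + 1)) ∧
  (∀ j, 1 ≤ j → j + 1 ≤ n →
    ValidPair (ε j) (L (l j)) (L (l (j + 1))) (Q j) (Q (j + 1)))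

def InV {B : Type*} (m : ℕ) (L Q : ℕ → Packet B) (ε : ℕ → ℝ) : ℕ → ℕ → Prop
  | _, 0 => False
  | i, 1 => 1 ≤ i ∧ i ≤ m ∧ (L i).b = (Q 1).b
  | i, (j + 2) => 1 ≤ i ∧ i ≤ m ∧ ∃ k, k < i ∧ InV m L Q ε k (j + 1) ∧
      ValidPair (ε (j + 1)) (L k) (L i) (Q (j + 1)) (Q (j + 2))

def InE {B : Type*} (m : ℕ) (L Q : ℕ → Packet B) (ε : ℕ → ℝ) (v w : ℕ × ℕ) : Prop :=
  v.2 = w.2 + 1 ∧ w.1 < v.1 ∧ v.1 ≤ m ∧ InV m L Q ε w.1 w.2 ∧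
    ValidPair (ε w.2) (L w.1) (L v.1) (Q w.2) (Q v.2)

lemma inV_to_match {B : Type*} (m : ℕ) (L Q : ℕ → Packet B) (ε : ℕ → ℝ) :
    ∀ j, 1 ≤ j → ∀ k, InV m L Q ε k j →
      ∃ l, IsMatch m j L Q ε l ∧ l j = k := by
  intro j
  induction j using Nat.strong_induction_on with
  | _ j ih =>
    match j with
    | 0 => intro h; omega
    | 1 =>
      intro _ k hk
      refine ⟨fun _ => k, ⟨?_, ?_, ?_⟩, rfl⟩
      · intro t h1 h2; exact ⟨hk.1, hk.2.1⟩
      · intro t h1 h2; omega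
      · intro t h1 h2; omega
    | (j' + 2) =>
      intro _ k hk
      obtain ⟨hk1, hkm, k', hk'k, hInV, hVP⟩ := hk
      obtain ⟨l', ⟨hb, hi, hv⟩, hl'⟩ := ih (j' + 1) (by omega) (by omega) k' hInV
      refine ⟨fun t => if t = j' + 2 then k else l' t, ⟨?_, ?_, ?_⟩, by simp⟩
      · intro t h1 h2
        by_cases ht : t = j' + 2
        · simp [ht]; exact ⟨hk1, hkm⟩
        · simp only [if_neg ht]; exact hb t h1 (by omega)
      · intro t h1 h2
        have ht : t ≠ j' + 2 := by omega
        by_cases ht' : t + 1 = j' + 2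
        · have heq : t = j' + 1 := by omega
          subst heq
          simp only [show j' + 1 + 1 = j' + 2 from rfl, if_pos rfl,
            if_neg (show j' + 1 ≠ j' + 2 by omega), hl']
          exact hk'k
        · simp only [if_neg ht, if_neg ht']; exact hi t h1 (by omega)
      · intro t h1 h2
        have ht : t ≠ j' + 2 := by omega
        by_cases ht' : t + 1 = j' + 2
        · have heq : t = j' + 1 := by omega
          subst heq
          simp only [show j' + 1 + 1 = j' + 2 from rfl, if_pos rfl,
            if_neg (show j' + 1 ≠ j' + 2 by omega), hl']
          exact hVP
        · simp only [if_neg ht, if_neg ht']; exact hv t h1 (by omega)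

lemma match_to_inV {B : Type*} (m : ℕ) (L Q : ℕ → Packet B) (ε : ℕ → ℝ)
    (j : ℕ) (hj : 2 ≤ j) (l : ℕ → ℕ) (hl : IsMatch m j L Q ε l) :
    ∀ t, 1 ≤ t → t ≤ j → InV m L Q ε (l t) t := by
  obtain ⟨hb, hi, hv⟩ := hl
  intro t
  induction t using Nat.strong_induction_on with
  | _ t ih =>
    match t with
    | 0 => omega
    | 1 =>
      intro _ _
      exact ⟨(hb 1 le_rfl (by omega)).1, (hb 1 le_rfl (by omega)).2,
        (hv 1 le_rfl (by omega)).1⟩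
    | (t' + 2) =>
      intro _ h2
      exact ⟨(hb _ (by omega) h2).1, (hb _ (by omega) h2).2, l (t' + 1),
        hi (t' + 1) (by omega) (by omega), ih (t' + 1) (by omega) (by omega) (by omega),
        hv (t' + 1) (by omega) (by omega)⟩

theorem edge_iff_prefix_match {B : Type*} (m n : ℕ) (L Q : ℕ → Packet B) (ε : ℕ → ℝ)
    (hL : StrictTimes m L) (hQ : StrictTimes n Q)
    (hε : ∀ j, 1 ≤ j → j + 1 ≤ n → 0 < ε j)
    (j i k : ℕ) (hj2 : 2 ≤ j) (hjn : j ≤ n) (hk1 : 1 ≤ k) (hki : k < i) (him : i ≤ m) :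
    InE m L Q ε (i, j) (k, j - 1) ↔
      ∃ l : ℕ → ℕ, IsMatch m j L Q ε l ∧ l (j - 1) = k ∧ l j = i := by
  obtain ⟨j', rfl⟩ : ∃ j', j = j' + 2 := ⟨j - 2, by omega⟩
  have hsub : j' + 2 - 1 = j' + 1 := rfl
  constructor
  · rintro ⟨-, -, -, hInV, hVP⟩
    simp only [hsub] at hInV hVP
    obtain ⟨l', ⟨hb, hi, hv⟩, hl'⟩ := inV_to_match m L Q ε (j' + 1) (by omega) k hInV
    refine ⟨fun t => if t = j' + 2 then i else l' t, ⟨?_, ?_, ?_⟩, ?_, by simp⟩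
    · intro t h1 h2
      by_cases ht : t = j' + 2
      · simp [ht]; exact ⟨by omega, him⟩
      · simp only [if_neg ht]; exact hb t h1 (by omega)
    · intro t h1 h2
      have ht : t ≠ j' + 2 := by omega
      by_cases ht' : t + 1 = j' + 2
      · have heq : t = j' + 1 := by omega
        subst heq
        simp only [show j' + 1 + 1 = j' + 2 from rfl, if_pos rfl,
          if_neg (show j' + 1 ≠ j' + 2 by omega), hl']
        exact hki
      · simp only [if_neg ht, if_neg ht']; exact hi t h1 (by omega)
    · intro t h1 h2
      have ht : t ≠ j' + 2 := by omega
      by_cases ht' : t + 1 = j' + 2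
      · have heq : t = j' + 1 := by omega
        subst heq
        simp only [show j' + 1 + 1 = j' + 2 from rfl, if_pos rfl,
          if_neg (show j' + 1 ≠ j' + 2 by omega), hl']
        exact hVP
      · simp only [if_neg ht, if_neg ht']; exact hv t h1 (by omega)
    · simp [hsub]
      exact hl'
  · rintro ⟨l, hM, hk, hi⟩
    have hInV := match_to_inV m L Q ε (j' + 2) (by omega) l hM (j' + 1) (by omega) (by omega)
    obtain ⟨hb, hinc, hv⟩ := hM
    simp only [hsub] at hk ⊢
    refine ⟨rfl, ?_, him, ?_, ?_⟩
    · simpa using hki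
    · rw [← hk] at *; exact hInV
    · have := hv (j' + 1) (by omega) (by omega)
      rw [hk, hi] at this
      exact this
end

section
/- If (v_{l[n],n}, v_{l[n−1],n−1}, …, v_{l[1],1}) is a directed path in G_LS, then l[1] < l[2] < … < l[n] and (l[1], …, l[n]) is an ε-valid match of the signature S in the log L. -/
theorem path_gives_match {B : Type*} (m n : ℕ) (L Q : ℕ → Packet B) (ε : ℕ → ℝ)
    (hL : StrictTimes m L) (hQ : StrictTimes n Q)
    (hε : ∀ j, 1 ≤ j → j + 1 ≤ n → 0 < ε j)
    (l : ℕ → ℕ)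
    (hV : ∀ j, 1 ≤ j → j ≤ n → InV m L Q ε (l j) j)
    (hE : ∀ j, 1 ≤ j → j + 1 ≤ n → InE m L Q ε (l (j + 1), j + 1) (l j, j)) :
    (∀ j j', 1 ≤ j → j < j' → j' ≤ n → l j < l j') ∧ IsMatch m n L Q ε l := by
  have hbnd : ∀ j, 1 ≤ j → j ≤ n → 1 ≤ l j ∧ l j ≤ m := by
    intro j hj hjn
    have h := hV j hj hjn
    match j, h with
    | 1, h => exact ⟨h.1, h.2.1⟩
    | (j + 2), h => exact ⟨h.1, h.2.1⟩
  have hstep : ∀ j, 1 ≤ j → j + 1 ≤ n → l j < l (j + 1) := by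
    intro j hj hjn
    exact (hE j hj hjn).2.1
  have hmono : ∀ j j', 1 ≤ j → j < j' → j' ≤ n → l j < l j' := by
    intro j j' hj hlt hn
    induction j' with
    | zero => omega
    | succ k ih =>
      rcases Nat.lt_or_ge j k with h | h
      · exact lt_trans (ih h (by omega)) (hstep k (by omega) hn)
      · have : j = k := by omega
        subst this
        exact hstep j hj hn
  refine ⟨hmono, hbnd, hstep, ?_⟩
  intro j hj hjn
  exact (hE j hj hjn).2.2.2.2
end

section
/- For all integers m ≥ n ≥ 1, there exist a network traffic log L of m packets, a signature S of n packets, and a tolerance vector ε of n−1 positive reals such that the set of ε-valid matches of S in L is exactly the set of all strictly increasing index sequences l[1] < … < l[n] with values in {1, …, m}; consequently the number of ε-valid matches of S in L equals the binomial coefficient C(m, n). (One such construction: all base packets equal to a fixed element b of B, log timestamps p_i.t = i, signature timestamps q_j.t = j, and tolerances ε_j = m for all j.) -/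
namespace List

variable {α : Type*}

theorem forall_getD_pred_iff (l : List α) (d : α) (P : α → Prop) :
    (∀ j, 1 ≤ j → j ≤ l.length → P (l.getD (j - 1) d)) ↔ ∀ x ∈ l, P x := by
  rw [forall_mem_iff_getElem]
  constructor
  · intro h i hi
    have := h (i + 1) (by omega) hi
    rwa [Nat.add_sub_cancel, getD_eq_getElem _ _ hi] at this
  · intro h j hj hjl
    rw [getD_eq_getElem _ _ (by omega)]
    exact h _ _

theorem forall_getD_pred_succ_iff_isChain (l : List α) (d : α) (R : α → α → Prop) :
    (∀ j, 1 ≤ j → j + 1 ≤ l.length → R (l.getD (j - 1) d) (l.getD j d)) ↔ l.IsChain R := by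
  rw [isChain_iff_getElem]
  constructor
  · intro h i hi
    have := h (i + 1) (by omega) hi
    rwa [Nat.add_sub_cancel, getD_eq_getElem _ _ hi, getD_eq_getElem _ _ (by omega)] at this
  · intro h j hj hjl
    rw [getD_eq_getElem _ _ (by omega), getD_eq_getElem _ _ (by omega)]
    simpa only [Nat.sub_add_cancel hj] using h (j - 1) (by omega)

end List

theorem List.getD_strictMono_in_Icc_iff (l : List ℕ) (m : ℕ) :
    ((∀ j, 1 ≤ j → j ≤ l.length → 1 ≤ l.getD (j - 1) 0 ∧ l.getD (j - 1) 0 ≤ m) ∧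
      ∀ j, 1 ≤ j → j + 1 ≤ l.length → l.getD (j - 1) 0 < l.getD j 0) ↔
    l.SortedLT ∧ ∀ x ∈ l, x ∈ Finset.Icc 1 m := by
  rw [and_comm, List.sortedLT_iff_isChain]
  simpa only [Finset.mem_Icc] using and_congr
    (List.forall_getD_pred_succ_iff_isChain l 0 (· < ·))
    (List.forall_getD_pred_iff l 0 (· ∈ Finset.Icc 1 m))

theorem Finset.ncard_sortedLT_lists_eq_choose {α : Type*} [LinearOrder α] (s : Finset α) (n : ℕ) :
    {l : List α | l.length = n ∧ l.SortedLT ∧ ∀ x ∈ l, x ∈ s}.ncard = s.card.choose n := by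
  classical
  have himage : {l : List α | l.length = n ∧ l.SortedLT ∧ ∀ x ∈ l, x ∈ s} =
      (fun t : Finset α => t.sort) '' (s.powersetCard n : Set (Finset α)) := by
    ext l
    simp only [Set.mem_ofPred_eq, Set.mem_image, Finset.mem_coe, Finset.mem_powersetCard]
    constructor
    · rintro ⟨hlen, hsorted, hmem⟩
      refine ⟨l.toFinset, ⟨fun x hx => hmem x (List.mem_toFinset.mp hx), ?_⟩, ?_⟩
      · rw [List.toFinset_card_of_nodup hsorted.nodup, hlen]
      · exact (List.toFinset_sort _ hsorted.nodup).mpr hsorted.sortedLE.pairwise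
    · rintro ⟨t, ⟨hts, hcard⟩, rfl⟩
      exact ⟨by rw [Finset.length_sort, hcard], t.sortedLT_sort,
        fun x hx => hts ((Finset.mem_sort _).mp hx)⟩
  have hinj : Function.Injective fun t : Finset α => t.sort := fun t u h => by
    simpa using congrArg List.toFinset h
  rw [himage, Set.ncard_image_of_injective _ hinj, Set.ncard_coe_finset, Finset.card_powersetCard]

section UniformPackets

variable {B : Type*} (b : B)

def uniformPackets (i : ℕ) : Packet B := ⟨i, b⟩

theorem strictTimes_uniformPackets (m : ℕ) : StrictTimes m (uniformPackets b) :=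
  fun _ _ _ h _ => by simpa [uniformPackets] using h

theorem validPair_uniformPackets {m i i' j : ℕ} {δ : ℝ} (hi : 1 ≤ i) (hii' : i < i')
    (hi' : i' ≤ m) (hδ : (m : ℝ) ≤ δ) :
    ValidPair δ (uniformPackets b i) (uniformPackets b i')
      (uniformPackets b j) (uniformPackets b (j + 1)) := by
  refine ⟨rfl, rfl, ?_⟩
  have : (i : ℝ) + 1 ≤ i' := by exact_mod_cast hii'
  have : (1 : ℝ) ≤ i := by exact_mod_cast hi
  have : (i' : ℝ) ≤ m := by exact_mod_cast hi'
  simp only [uniformPackets, Nat.cast_add, Nat.cast_one]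
  rw [abs_le]
  constructor <;> linarith

theorem isMatch_uniformPackets_iff {m n : ℕ} {ε : ℕ → ℝ} (hε : ∀ j, (m : ℝ) ≤ ε j)
    (l : ℕ → ℕ) :
    IsMatch m n (uniformPackets b) (uniformPackets b) ε l ↔
      (∀ j, 1 ≤ j → j ≤ n → 1 ≤ l j ∧ l j ≤ m) ∧
      (∀ j, 1 ≤ j → j + 1 ≤ n → l j < l (j + 1)) := by
  refine ⟨fun ⟨hrange, hlt, _⟩ => ⟨hrange, hlt⟩, fun ⟨hrange, hlt⟩ => ⟨hrange, hlt, ?_⟩⟩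
  intro j hj hjn
  exact validPair_uniformPackets b (hrange j hj (by omega)).1 (hlt j hj hjn)
    (hrange (j + 1) (by omega) hjn).2 (hε j)

end UniformPackets

theorem all_increasing_sequences_matchable_general {B : Type*} [Nonempty B]
    (m n : ℕ) :
    ∃ (L Q : ℕ → Packet B) (ε : ℕ → ℝ),
      StrictTimes m L ∧ StrictTimes n Q ∧ (∀ j, 1 ≤ j → j + 1 ≤ n → 0 < ε j) ∧
      (∀ l : ℕ → ℕ, IsMatch m n L Q ε l ↔
        ((∀ j, 1 ≤ j → j ≤ n → 1 ≤ l j ∧ l j ≤ m) ∧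
         (∀ j, 1 ≤ j → j + 1 ≤ n → l j < l (j + 1)))) ∧
      {l : List ℕ | l.length = n ∧ IsMatch m n L Q ε (fun j => l.getD (j - 1) 0)}.ncard = m.choose n := by
  obtain ⟨b⟩ := ‹Nonempty B›
  have hmatch := isMatch_uniformPackets_iff b (n := n) fun _ => (lt_add_one (m : ℝ)).le
  refine ⟨uniformPackets b, uniformPackets b, fun _ => m + 1, strictTimes_uniformPackets b m,
    strictTimes_uniformPackets b n, fun _ _ _ => by positivity, hmatch, ?_⟩
  have hmatches : {l : List ℕ | l.length = n ∧
      IsMatch m n (uniformPackets b) (uniformPackets b) (fun _ => m + 1)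
        (fun j => l.getD (j - 1) 0)} =
      {l : List ℕ | l.length = n ∧ l.SortedLT ∧ ∀ x ∈ l, x ∈ Finset.Icc 1 m} := by
    ext l
    simp only [Set.mem_ofPred_eq, hmatch]
    exact and_congr_right fun hlen => hlen ▸ List.getD_strictMono_in_Icc_iff l m
  rw [hmatches, Finset.ncard_sortedLT_lists_eq_choose, Nat.card_Icc, Nat.add_sub_cancel]

theorem all_increasing_sequences_matchable {B : Type*} [Nonempty B]
    (m n : ℕ) (hn : 1 ≤ n) (hnm : n ≤ m) :
    ∃ (L Q : ℕ → Packet B) (ε : ℕ → ℝ),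
      StrictTimes m L ∧ StrictTimes n Q ∧ (∀ j, 1 ≤ j → j + 1 ≤ n → 0 < ε j) ∧
      (∀ l : ℕ → ℕ, IsMatch m n L Q ε l ↔
        ((∀ j, 1 ≤ j → j ≤ n → 1 ≤ l j ∧ l j ≤ m) ∧
         (∀ j, 1 ≤ j → j + 1 ≤ n → l j < l (j + 1)))) ∧
      {l : List ℕ | l.length = n ∧ IsMatch m n L Q ε (fun j => l.getD (j - 1) 0)}.ncard = m.choose n :=
  all_increasing_sequences_matchable_general m n
end

section
/- Let S^1, …, S^K be signatures with tolerance vectors ε^1, …, ε^K, and define the procedure actExtract on a log L recursively as follows: if no signature S^k has an ε^k-valid match in L, output the empty sequence; otherwise, among all pairs (k, l) with l an ε^k-valid match of S^k in L, select the pair whose match has the smallest first index, output k, delete from L every packet whose timestamp is at most the timestamp of the last matched packet, and recurse on the remaining log. Suppose L is a concatenation L = B_1 ++ B_2 ++ … ++ B_x of nonempty blocks such that, for each λ, the index set of block B_λ (listed in increasing order) is an ε^{k_λ}-valid match of S^{k_λ} in L, and such that for every suffix L_λ = B_λ ++ … ++ B_x (for 1 ≤ λ ≤ x, and L_{x+1}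 the empty log) and every k, every ε^k-valid match of S^k in L_λ equals the index set of one of the blocks B_μ with μ ≥ λ and k = k_μ. Then actExtract(L) outputs exactly the sequence (k_1, k_2, …, k_x); that is, actExtract correctly unveils the sequence of device activities that generated L. -/
inductive Extracts {B : Type*} (K : ℕ) (nsig : ℕ → ℕ) (Q : ℕ → ℕ → Packet B)
    (ε : ℕ → ℕ → ℝ) : ℕ → (ℕ → Packet B) → List ℕ → Prop
  | nil (m : ℕ) (L : ℕ → Packet B)
      (hnone : ∀ k, 1 ≤ k → k ≤ K → ¬ ∃ l : ℕ → ℕ, IsMatch m (nsig k) L (Q k) (ε k) l) :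
      Extracts K nsig Q ε m L []
  | cons (m : ℕ) (L : ℕ → Packet B) (k : ℕ) (l : ℕ → ℕ) (d : ℕ) (out : List ℕ)
      (hk1 : 1 ≤ k) (hkK : k ≤ K)
      (hl : IsMatch m (nsig k) L (Q k) (ε k) l)
      (hmin : ∀ k' l', 1 ≤ k' → k' ≤ K →
        IsMatch m (nsig k') L (Q k') (ε k') l' → l 1 ≤ l' 1)
      (hdm : d ≤ m)
      (hcut1 : ∀ i, 1 ≤ i → i ≤ d → (L i).t ≤ (L (l (nsig k))).t)
      (hcut2 : ∀ i, d + 1 ≤ i → i ≤ m → (L (l (nsig k))).t < (L i).t)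
      (hrec : Extracts K nsig Q ε (m - d) (fun i => L (d + i)) out) :
      Extracts K nsig Q ε m L (k :: out)

lemma isMatch_of_eq {B : Type*} {m m' n : ℕ} {L L' Q : ℕ → Packet B} {ε : ℕ → ℝ} {l : ℕ → ℕ}
    (hm : m = m') (hLL : ∀ i, L i = L' i) (h : IsMatch m n L Q ε l) :
    IsMatch m' n L' Q ε l := by
  obtain ⟨h1, h2, h3⟩ := h
  subst hm
  exact ⟨h1, h2, fun j hj hj' => by rw [← hLL, ← hLL]; exact h3 j hj hj'⟩

lemma s_mono {x : ℕ} {s : ℕ → ℕ}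
    (hpos : ∀ lam, 1 ≤ lam → lam ≤ x → s (lam - 1) < s lam)
    {a b : ℕ} (hab : a ≤ b) (hbx : b ≤ x) : s a ≤ s b := by
  induction b with
  | zero => simp [Nat.le_zero.mp hab]
  | succ n ih =>
    rcases Nat.eq_or_lt_of_le hab with h | h
    · rw [h]
    · have h1 : s a ≤ s n := ih (by omega) (by omega)
      have h2 : s n < s (n + 1) := by
        have := hpos (n + 1) (by omega) hbx
        simpa using this
      omega

lemma isMatch_shift {B : Type*} {m n a c : ℕ} {L Q : ℕ → Packet B} {ε : ℕ → ℝ}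
    (hc : c ≤ a) (h : IsMatch m n L Q ε (fun j => a + j)) :
    IsMatch (m - c) n (fun i => L (c + i)) Q ε (fun j => a - c + j) := by
  obtain ⟨h1, h2, h3⟩ := h
  refine ⟨fun j hj hj' => ?_, fun j hj hj' => by show a - c + j < a - c + (j + 1); omega, fun j hj hj' => ?_⟩
  · have : 1 ≤ a + j ∧ a + j ≤ m := h1 j hj hj'
    show 1 ≤ a - c + j ∧ a - c + j ≤ m - c
    omega
  · have hv : ValidPair (ε j) (L (a + j)) (L (a + (j + 1))) (Q j) (Q (j + 1)) := h3 j hj hj'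
    have e1 : c + (a - c + j) = a + j := by omega
    have e2 : c + (a - c + (j + 1)) = a + (j + 1) := by omega
    show ValidPair (ε j) (L (c + (a - c + j))) (L (c + (a - c + (j + 1)))) (Q j) (Q (j + 1))
    rw [e1, e2]
    exact hv

lemma range'_map_succ (f : ℕ → ℕ) (x : ℕ) :
    (List.range' 1 (x + 1)).map f = f 1 :: (List.range' 1 x).map (fun i => f (i + 1)) := by
  have key : ∀ (y a : ℕ), (List.range' (a + 1) y).map f
      = (List.range' a y).map (fun i => f (i + 1)) := by
    intro y
    induction y with
    | zero => intro a; simp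
    | succ n ih => intro a; simp [List.range'_succ, ih (a + 1)]
  rw [List.range'_succ]
  simp [key x 1]

theorem actExtract_correct {B : Type*} (m K x : ℕ)
    (L : ℕ → Packet B) (hL : StrictTimes m L)
    (nsig : ℕ → ℕ) (Q : ℕ → ℕ → Packet B) (ε : ℕ → ℕ → ℝ)
    (hQ : ∀ k, 1 ≤ k → k ≤ K → StrictTimes (nsig k) (Q k))
    (hε : ∀ k, 1 ≤ k → k ≤ K → ∀ j, 1 ≤ j → j + 1 ≤ nsig k → 0 < ε k j)
    (hn : ∀ k, 1 ≤ k → k ≤ K → 1 ≤ nsig k)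
    (kk : ℕ → ℕ) (hkk : ∀ lam, 1 ≤ lam → lam ≤ x → 1 ≤ kk lam ∧ kk lam ≤ K)
    (s : ℕ → ℕ) (hs0 : s 0 = 0) (hsx : s x = m)
    (hpos : ∀ lam, 1 ≤ lam → lam ≤ x → s (lam - 1) < s lam)
    (hlen : ∀ lam, 1 ≤ lam → lam ≤ x → s lam - s (lam - 1) = nsig (kk lam))
    (hblock : ∀ lam, 1 ≤ lam → lam ≤ x →
      IsMatch m (nsig (kk lam)) L (Q (kk lam)) (ε (kk lam)) (fun j => s (lam - 1) + j))
    (hall : ∀ lam, 1 ≤ lam → lam ≤ x + 1 → ∀ k, 1 ≤ k → k ≤ K → ∀ l : ℕ → ℕ,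
      IsMatch (m - s (lam - 1)) (nsig k) (fun i => L (s (lam - 1) + i)) (Q k) (ε k) l →
      ∃ mu, lam ≤ mu ∧ mu ≤ x ∧ k = kk mu ∧
        ∀ j, 1 ≤ j → j ≤ nsig k → l j = s (mu - 1) - s (lam - 1) + j) :
    ∀ out : List ℕ, Extracts K nsig Q ε m L out ↔ out = (List.range' 1 x).map kk := by
  induction x generalizing m L kk s with
  | zero =>
    have hm0 : m = 0 := by rw [← hsx, hs0]
    have hnone : ∀ k, 1 ≤ k → k ≤ K → ¬ ∃ l : ℕ → ℕ, IsMatch m (nsig k) L (Q k) (ε k) l := by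
      rintro k hk1 hkK ⟨l, hl⟩
      have hl' : IsMatch (m - s 0) (nsig k) (fun i => L (s 0 + i)) (Q k) (ε k) l :=
        isMatch_of_eq (by omega) (fun i => by rw [hs0, Nat.zero_add]) hl
      obtain ⟨mu, h1, h2, -⟩ := hall 1 le_rfl (by omega) k hk1 hkK l hl'
      omega
    intro out
    constructor
    · intro h
      cases h with
      | nil _ _ _ => rfl
      | cons _ _ k l d out' hk1 hkK hl hmin hdm hcut1 hcut2 hrec =>
        exact absurd ⟨l, hl⟩ (hnone k hk1 hkK)
    · rintro rfl
      exact Extracts.nil m L hnone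
  | succ x ih =>
    have hmono : ∀ a b, a ≤ b → b ≤ x + 1 → s a ≤ s b := fun a b h1 h2 => s_mono hpos h1 h2
    have hk1K := hkk 1 (by omega) (by omega)
    have hn1 : 1 ≤ nsig (kk 1) := hn _ hk1K.1 hk1K.2
    have hs1m : s 1 ≤ m := by
      have := hmono 1 (x + 1) (by omega) le_rfl; omega
    have hs1pos : 1 ≤ s 1 := by
      have := hpos 1 (by omega) (by omega); omega
    have hlen1 : s 1 - s 0 = nsig (kk 1) := hlen 1 (by omega) (by omega)
    have hidx : s 0 + nsig (kk 1) = s 1 := by omega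
    have hb1 : IsMatch m (nsig (kk 1)) L (Q (kk 1)) (ε (kk 1)) (fun j => s 0 + j) :=
      hblock 1 (by omega) (by omega)
    -- characterization of any match of L
    have hchar : ∀ k, 1 ≤ k → k ≤ K → ∀ l, IsMatch m (nsig k) L (Q k) (ε k) l →
        ∃ mu, 1 ≤ mu ∧ mu ≤ x + 1 ∧ k = kk mu ∧
          ∀ j, 1 ≤ j → j ≤ nsig k → l j = s (mu - 1) + j := by
      intro k hk1 hkK l hl
      have hl' : IsMatch (m - s 0) (nsig k) (fun i => L (s 0 + i)) (Q k) (ε k) l :=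
        isMatch_of_eq (by omega) (fun i => by rw [hs0, Nat.zero_add]) hl
      obtain ⟨mu, h1, h2, h3, h4⟩ := hall 1 le_rfl (by omega) k hk1 hkK l hl'
      refine ⟨mu, h1, by omega, h3, fun j hj hj' => ?_⟩
      have := h4 j hj hj'
      simp only [Nat.sub_self] at this
      omega
    -- the induction hypothesis applied to the shifted data
    have IH := ih (m - s 1) (fun i => L (s 1 + i))
      (fun i i' h1 h2 h3 => hL (s 1 + i) (s 1 + i') (by omega) (by omega) (by omega))
      (fun lam => kk (lam + 1))
      (fun lam h1 h2 => hkk (lam + 1) (by omega) (by omega))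
      (fun lam => s (lam + 1) - s 1)
      (by show s (0 + 1) - s 1 = 0; simp)
      (by show s (x + 1) - s 1 = m - s 1; rw [hsx])
      (by
        intro lam h1 h2
        show s (lam - 1 + 1) - s 1 < s (lam + 1) - s 1
        have e : lam - 1 + 1 = lam := by omega
        have hp := hpos (lam + 1) (by omega) (by omega)
        have hle : s 1 ≤ s lam := hmono 1 lam h1 (by omega)
        rw [e]
        simp only [Nat.add_sub_cancel] at hp
        omega)
      (by
        intro lam h1 h2
        show s (lam + 1) - s 1 - (s (lam - 1 + 1) - s 1) = nsig (kk (lam + 1))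
        have e : lam - 1 + 1 = lam := by omega
        have hl := hlen (lam + 1) (by omega) (by omega)
        have hle : s 1 ≤ s lam := hmono 1 lam h1 (by omega)
        have hle2 : s lam ≤ s (lam + 1) := hmono lam (lam + 1) (by omega) (by omega)
        rw [e]
        simp only [Nat.add_sub_cancel] at hl
        omega)
      (by
        intro lam h1 h2
        show IsMatch (m - s 1) (nsig (kk (lam + 1))) (fun i => L (s 1 + i))
          (Q (kk (lam + 1))) (ε (kk (lam + 1))) (fun j => s (lam - 1 + 1) - s 1 + j)
        have e : lam - 1 + 1 = lam := by omega
        have hb := hblock (lam + 1) (by omega) (by omega)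
        simp only [Nat.add_sub_cancel] at hb
        have hle : s 1 ≤ s lam := hmono 1 lam h1 (by omega)
        rw [e]
        exact isMatch_shift hle hb)
      (by
        intro lam h1 h2 k hk1 hkK l hl
        have e : lam - 1 + 1 = lam := by omega
        have hle : s 1 ≤ s lam := hmono 1 lam h1 (by omega)
        have hlem : s lam ≤ m := by
          have := hmono lam (x + 1) (by omega) le_rfl; omega
        have hl2 : IsMatch (m - s lam) (nsig k) (fun i => L (s lam + i)) (Q k) (ε k) l := by
          refine isMatch_of_eq ?_ (fun i => ?_) hl
          · show m - s 1 - (s (lam - 1 + 1) - s 1) = m - s lam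
            rw [e]; omega
          · show L (s 1 + (s (lam - 1 + 1) - s 1 + i)) = L (s lam + i)
            rw [e]
            congr 1
            omega
        obtain ⟨mu, hm1, hm2, hm3, hm4⟩ :=
          hall (lam + 1) (by omega) (by omega) k hk1 hkK l
            (by simpa only [Nat.add_sub_cancel] using hl2)
        have hle3 : s lam ≤ s (mu - 1) := hmono lam (mu - 1) (by omega) (by omega)
        have hle4 : s 1 ≤ s (mu - 1) := by omega
        refine ⟨mu - 1, by omega, by omega, ?_, ?_⟩
        · show k = kk (mu - 1 + 1)
          rw [show mu - 1 + 1 = mu by omega]; exact hm3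
        · intro j hj hj'
          show l j = s (mu - 1 - 1 + 1) - s 1 - (s (lam - 1 + 1) - s 1) + j
          have := hm4 j hj hj'
          simp only [Nat.add_sub_cancel] at this
          rw [show mu - 1 - 1 + 1 = mu - 1 by omega, e]
          omega)
    intro out
    constructor
    · intro h
      cases h with
      | nil _ _ hnone =>
        exact absurd ⟨_, hb1⟩ (hnone (kk 1) hk1K.1 hk1K.2)
      | cons _ _ k l d out' hk1 hkK hl hmin hdm hcut1 hcut2 hrec =>
        obtain ⟨mu, hμ1, hμ2, hkeq, hlj⟩ := hchar k hk1 hkK l hl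
        have hnk : 1 ≤ nsig k := hn k hk1 hkK
        have hmin1 : l 1 ≤ s 0 + 1 := hmin (kk 1) (fun j => s 0 + j) hk1K.1 hk1K.2 hb1
        have hl1 : l 1 = s (mu - 1) + 1 := hlj 1 le_rfl hnk
        have hmu : mu = 1 := by
          by_contra hmu
          have : s 1 ≤ s (mu - 1) := hmono 1 (mu - 1) (by omega) (by omega)
          omega
        subst hmu
        have hkeq1 : k = kk 1 := hkeq
        have hlast : l (nsig k) = s 1 := by
          rw [hlj (nsig k) hnk le_rfl, hkeq1]
          omega
        have hd : d = s 1 := by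
          by_contra hd
          rcases Nat.lt_or_ge d (s 1) with hlt | hge
          · have := hcut2 (s 1) (by omega) hs1m
            rw [hlast] at this
            exact lt_irrefl _ this
          · have hgt : s 1 < d := by omega
            have h1 := hcut1 d (by omega) le_rfl
            rw [hlast] at h1
            have h2 := hL (s 1) d hs1pos hgt hdm
            linarith
        subst hd
        have hout' := (IH out').mp hrec
        rw [hout', hkeq1, range'_map_succ]
    · rintro rfl
      rw [range'_map_succ]
      refine Extracts.cons m L (kk 1) (fun j => s 0 + j) (s 1) _ hk1K.1 hk1K.2 hb1
        ?_ hs1m ?_ ?_ ((IH _).mpr rfl)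
      · intro k' l' h1 h2 hm'
        obtain ⟨mu, hμ1, hμ2, -, hlj⟩ := hchar k' h1 h2 l' hm'
        have := hlj 1 le_rfl (hn k' h1 h2)
        show s 0 + 1 ≤ l' 1
        omega
      · intro i hi1 hi2
        show (L i).t ≤ (L (s 0 + nsig (kk 1))).t
        rw [hidx]
        rcases Nat.eq_or_lt_of_le hi2 with h | h
        · rw [h]
        · exact le_of_lt (hL i (s 1) hi1 h hs1m)
      · intro i hi1 hi2
        show (L (s 0 + nsig (kk 1))).t < (L i).t
        rw [hidx]
        exact hL (s 1) i hs1pos (by omega) hi2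
end
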